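/- For any probability vectors p, q ∈ P_n, half(p ∧ q) ⪯ half(p) ∧ half(q), where ∧ denotes the greatest lower bound in the majorization lattice and half duplicates and halves each component. -/

import Mathlib

open Finset

/-- Majorization via prefix sums (vectors as functions ℕ → ℝ, padded with zeros). -/
def Maj (p q : ℕ → ℝ) : Prop :=
  ∀ i : ℕ, ∑ k ∈ Finset.range i, p k ≤ ∑ k ∈ Finset.range i, q k

/-- A probability vector of length `n`, sorted non-increasingly, zero beyond `n`. -/
def IsProbVec (n : ℕ) (p : ℕ → ℝ) : Prop :=
  (∀ i, 0 ≤ p i) ∧ (∀ i j : ℕ, i ≤ j → p j ≤ p i) ∧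
  (∑ k ∈ Finset.range n, p k = 1) ∧ (∀ i, n ≤ i → p i = 0)

/-- The greatest lower bound `p ∧ q` in the majorization lattice. -/
noncomputable def meet (p q : ℕ → ℝ) : ℕ → ℝ := fun i =>
  min (∑ k ∈ Finset.range (i + 1), p k) (∑ k ∈ Finset.range (i + 1), q k) -
  min (∑ k ∈ Finset.range i, p k) (∑ k ∈ Finset.range i, q k)

/-- Shannon entropy (base 2) of the first `n` components. -/
noncomputable def H2 (n : ℕ) (p : ℕ → ℝ) : ℝ :=
  ∑ k ∈ Finset.range n, -(p k * Real.logb 2 (p k))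

/-- Shannon entropy (base 2) of the entries of an `n × m` matrix. -/
noncomputable def Hmat (n m : ℕ) (M : ℕ → ℕ → ℝ) : ℝ :=
  ∑ i ∈ Finset.range n, ∑ j ∈ Finset.range m, -(M i j * Real.logb 2 (M i j))

/-- `M` is a coupling of `p` and `q`: nonnegative, row sums `p`, column sums `q`. -/
def IsCoupling (n m : ℕ) (p q : ℕ → ℝ) (M : ℕ → ℕ → ℝ) : Prop :=
  (∀ i j, 0 ≤ M i j) ∧ (∀ i < n, ∑ j ∈ Finset.range m, M i j = p i) ∧
  (∀ j < m, ∑ i ∈ Finset.range n, M i j = q j)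

/-- The `half` operator: duplicates and halves each component. -/
noncomputable def half (p : ℕ → ℝ) : ℕ → ℝ := fun i => p (i / 2) / 2

/-- Iterated `half` operator. -/
noncomputable def halfIter : ℕ → (ℕ → ℝ) → (ℕ → ℝ)
  | 0, p => p
  | (i + 1), p => half (halfIter i p)

/-- Iterated majorization meet of `p 0, p 1, …, p k`. -/
noncomputable def bigMeet (p : ℕ → ℕ → ℝ) : ℕ → (ℕ → ℝ)
  | 0 => p 0
  | (k + 1) => meet (bigMeet p k) (p (k + 1))

/-! The prefix sums of `meet p q` are the pointwise minima of those of `p` and `q`, and the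
`i`-th prefix sum of `half r` is the average of the prefix sums of `r` of lengths `⌈i/2⌉` and
`⌊i/2⌋`. The claim thus reduces to `min a c + min b d ≤ min (a + b) (c + d)`. -/

theorem sum_range_meet (p q : ℕ → ℝ) (i : ℕ) :
    ∑ k ∈ range i, meet p q k = min (∑ k ∈ range i, p k) (∑ k ∈ range i, q k) := by
  induction i with
  | zero => simp
  | succ i ih => rw [sum_range_succ, ih, meet, add_sub_cancel]

theorem sum_range_half (r : ℕ → ℝ) (i : ℕ) :
    ∑ k ∈ range i, half r k =
      (∑ k ∈ range ((i + 1) / 2), r k + ∑ k ∈ range (i / 2), r k) / 2 := by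
  induction i using Nat.twoStepInduction with
  | zero => simp
  | one => simp [half]
  | more i ih _ =>
    have hceil : (i + 2 + 1) / 2 = (i + 1) / 2 + 1 := by omega
    have hfloor : (i + 2) / 2 = i / 2 + 1 := by omega
    rw [sum_range_succ, sum_range_succ, ih, hceil, hfloor, sum_range_succ, sum_range_succ, half,
      half]
    ring

theorem stmt11_general (p q : ℕ → ℝ) :
    Maj (half (meet p q)) (meet (half p) (half q)) := by
  intro i
  simp only [sum_range_half, sum_range_meet]
  rw [min_div_div_right zero_le_two]
  gcongr
  exact min_add_min_le_min_add_add

theorem stmt11 (n : ℕ) (p q : ℕ → ℝ) (hp : IsProbVec n p) (hq : IsProbVec n q) :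
    Maj (half (meet p q)) (meet (half p) (half q)) :=
  stmt11_general p q
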